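/- arXiv:math/9806075 — 3 statements merged into one kernel-verified Lean document; each statement's English description precedes it below -/
import Mathlib

section
/- Let K be a prime, ζ = exp(2πi/K), and let m, n ∈ ℤ with n not divisible by K, and let n* ∈ ℤ satisfy n·n* ≡ 1 (mod K). For k ∈ ℕ set c_k = m(m−n)(m−2n)⋯(m−(k−1)n)/(nᵏ·k!) ∈ ℚ. Then for every N ≥ 0, every M ≥ (N+1)(K−1), and every choice of integers b₀, …, b_M with v_K(b_k − c_k) ≥ N+1 for all 0 ≤ k ≤ M, one has ζ^{m·n*} − Σ_{k=0}^{M} b_k·(ζ−1)^k ∈ K^{N+1}·ℤ[ζ]. -/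
/-!
Pick `s ∈ ℕ` with `n s ≡ m (mod K^(N+1+M))`. Then `s ≡ m n* (mod K)`, so
`ζ^(m n*) = ζ^s = ∑ₖ C(s,k) (ζ-1)^k`. In `ℤ[ζ]` the prime `K` is associated to `(ζ-1)^(K-1)`,
so every term with `k > M ≥ (N+1)(K-1)` is divisible by `K^(N+1)`. For `k ≤ M`,
`n^k k! (C(s,k) - c_k) = n^k ∏ⱼ (s-j) - ∏ⱼ (m-jn) ≡ 0 (mod K^(N+1+M))` and `v_K(k!) ≤ k ≤ M`
give `C(s,k) ≡ c_k ≡ b_k (mod K^(N+1))`.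
-/

open Finset

theorem IsPrimitiveRoot.associated_natCast_sub_one_pow {A : Type*} [CommRing A] [IsDomain A]
    {p : ℕ} (hp : p.Prime) {ζ : A} (hζ : IsPrimitiveRoot ζ p) :
    Associated (p : A) ((ζ - 1) ^ (p - 1)) := by
  obtain ⟨q, rfl⟩ : ∃ q, p = q + 1 := ⟨p - 1, (Nat.succ_pred_eq_of_pos hp.pos).symm⟩
  rw [Nat.cast_succ, ← prod_one_sub_pow_eq_order hζ, add_tsub_cancel_right,
    show (ζ - 1) ^ q = ∏ _k ∈ range q, (ζ - 1) by simp]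
  refine Associated.prod (range q) (fun k => 1 - ζ ^ (k + 1)) (fun _ => ζ - 1) fun k hk => ?_
  have hcop : (k + 1).Coprime (q + 1) :=
    (Nat.coprime_of_lt_prime k.succ_ne_zero (by simpa using mem_range.mp hk) hp).symm
  rw [← neg_sub]
  exact (hζ.associated_sub_one_pow_sub_one_of_coprime hcop).symm.neg_left

theorem pow_dvd_add_one_pow_sub_sum {A : Type*} [CommRing A] {p x : A} {e N M : ℕ}
    (hx : p ∣ x ^ e) (hM : (N + 1) * e ≤ M) (s : ℕ) (b : ℕ → A)
    (hb : ∀ k ≤ M, p ^ (N + 1) ∣ (s.choose k : A) - b k) :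
    p ^ (N + 1) ∣ (x + 1) ^ s - ∑ k ∈ range (M + 1), b k * x ^ k := by
  have hexp : (x + 1) ^ s = ∑ k ∈ range (M + 1 + s), (s.choose k : A) * x ^ k := by
    rw [add_pow, ← sum_subset (range_subset_range.2 (by omega : s + 1 ≤ M + 1 + s))]
    · exact sum_congr rfl fun k _ => by ring
    · intro k _ hk
      rw [Nat.choose_eq_zero_of_lt (by simpa using hk), Nat.cast_zero, zero_mul]
  have hsplit : (x + 1) ^ s - ∑ k ∈ range (M + 1), b k * x ^ k =
      ∑ k ∈ range (M + 1), ((s.choose k : A) - b k) * x ^ k +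
        ∑ i ∈ range s, (s.choose (M + 1 + i) : A) * x ^ (M + 1 + i) := by
    rw [hexp, sum_range_add, add_sub_right_comm, ← sum_sub_distrib]
    simp only [sub_mul]
  rw [hsplit]
  refine dvd_add (dvd_sum fun k hk => dvd_mul_of_dvd_left (hb k (mem_range_succ_iff.1 hk)) _)
    (dvd_sum fun i _ => dvd_mul_of_dvd_right ?_ _)
  calc p ^ (N + 1) ∣ (x ^ e) ^ (N + 1) := pow_dvd_pow_of_dvd hx _
    _ = x ^ (e * (N + 1)) := (pow_mul _ _ _).symm
    _ ∣ x ^ (M + 1 + i) := pow_dvd_pow _ (by rw [mul_comm]; omega)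

theorem Int.exists_natCast_mul_modEq {q n : ℤ} (hq : q ≠ 0) (hn : IsCoprime n q) (m : ℤ) :
    ∃ s : ℕ, n * s ≡ m [ZMOD q] := by
  obtain ⟨u, v, huv⟩ := hn
  refine ⟨(u * m % q).toNat, ?_⟩
  rw [Int.toNat_of_nonneg (Int.emod_nonneg _ hq)]
  calc n * (u * m % q) ≡ n * (u * m) [ZMOD q] := (Int.mod_modEq _ _).mul_left n
    _ ≡ m [ZMOD q] := Int.modEq_iff_dvd.2 ⟨v * m, by linear_combination (-m) * huv⟩

theorem prod_range_sub_mul_modEq_pow_mul_choose {q m n : ℤ} {s : ℕ} (h : n * s ≡ m [ZMOD q])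
    (k : ℕ) :
    ∏ j ∈ range k, (m - j * n) ≡ n ^ k * (k.factorial * s.choose k) [ZMOD q] := by
  have hdesc : ∏ j ∈ range k, ((s : ℤ) - j) = k.factorial * s.choose k := by
    rw [← descPochhammer_eval_eq_prod_range, descPochhammer_eval_eq_descFactorial,
      Nat.descFactorial_eq_factorial_mul_choose, Nat.cast_mul]
  calc ∏ j ∈ range k, (m - j * n) ≡ ∏ j ∈ range k, (n * s - j * n) [ZMOD q] :=
        Int.ModEq.prod fun j _ => h.symm.sub_right _
    _ = ∏ j ∈ range k, (n * ((s : ℤ) - j)) := prod_congr rfl fun j _ => by ring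
    _ = n ^ k * (k.factorial * s.choose k) := by
        rw [prod_mul_distrib, prod_const, card_range, hdesc]

theorem padicNorm_le_zpow_neg_of_le_padicValRat {p : ℕ} [Fact p.Prime] {q : ℚ} {e : ℤ}
    (h : q = 0 ∨ e ≤ padicValRat p q) : padicNorm p q ≤ (p : ℚ) ^ (-e) := by
  by_cases hq : q = 0
  · simp [hq, zpow_nonneg]
  rw [padicNorm.eq_zpow_of_nonzero hq]
  exact zpow_le_zpow_right₀ (by exact_mod_cast (Fact.out : p.Prime).one_le)
    (neg_le_neg (h.resolve_left hq))

theorem zpow_neg_le_padicNorm_factorial (p : ℕ) [Fact p.Prime] (k : ℕ) :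
    (p : ℚ) ^ (-k : ℤ) ≤ padicNorm p k.factorial := by
  rw [padicNorm.eq_zpow_of_nonzero (by positivity), padicValRat.of_nat]
  exact zpow_le_zpow_right₀ (by exact_mod_cast (Fact.out : p.Prime).one_le)
    (by simpa using padicValNat_factorial_le (p := p) k)

theorem padicNorm_choose_sub_le {K : ℕ} [Fact K.Prime] {m n : ℤ} (hn : ¬ (K : ℤ) ∣ n)
    {s T : ℕ} (h : n * s ≡ m [ZMOD K ^ T]) (k : ℕ) :
    padicNorm K ((s.choose k : ℚ) - (∏ j ∈ range k, ((m : ℚ) - j * n)) / (n ^ k * k.factorial))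
      ≤ (K : ℚ) ^ ((k : ℤ) - T) := by
  have hn0 : (n : ℚ) ≠ 0 := by exact_mod_cast fun h0 : n = 0 => hn (h0 ▸ dvd_zero _)
  have hK0 : (0 : ℚ) < K := by exact_mod_cast (Fact.out : K.Prime).pos
  have hdiff : (s.choose k : ℚ) - (∏ j ∈ range k, ((m : ℚ) - j * n)) / (n ^ k * k.factorial) =
      ((n ^ k * (k.factorial * s.choose k) - ∏ j ∈ range k, (m - j * n) : ℤ) : ℚ) /
        (n ^ k * k.factorial) := by
    rw [eq_div_iff (by positivity), sub_mul, div_mul_cancel₀ _ (by positivity)]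
    push_cast
    ring
  have hnum : padicNorm K ((n ^ k * (k.factorial * s.choose k) - ∏ j ∈ range k, (m - j * n) : ℤ)
      : ℚ) ≤ (K : ℚ) ^ (-T : ℤ) := by
    rw [← padicNorm.dvd_iff_norm_le, Nat.cast_pow]
    exact (prod_range_sub_mul_modEq_pow_mul_choose h k).dvd
  have hden : (K : ℚ) ^ (-k : ℤ) ≤ padicNorm K (n ^ k * k.factorial) := by
    have hnk : padicNorm K ((n ^ k : ℤ) : ℚ) = 1 := (padicNorm.int_eq_one_iff _).2
      fun hdvd => hn ((Nat.prime_iff_prime_int.mp Fact.out).dvd_of_dvd_pow hdvd)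
    rw [padicNorm.mul, ← Int.cast_pow, hnk, one_mul]
    exact zpow_neg_le_padicNorm_factorial K k
  rw [hdiff, padicNorm.div, show (k : ℤ) - T = -T - -k by ring, zpow_sub₀ hK0.ne']
  exact div_le_div₀ (by positivity) hnum (by positivity) hden

theorem natCast_pow_dvd_choose_sub {K : ℕ} [Fact K.Prime] {m n : ℤ} (hn : ¬ (K : ℤ) ∣ n)
    {s N M k : ℕ} (hk : k ≤ M) (h : n * s ≡ m [ZMOD K ^ (N + 1 + M)]) {b : ℤ}
    (hb : padicNorm K (b - (∏ j ∈ range k, ((m : ℚ) - j * n)) / (n ^ k * k.factorial)) ≤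
      (K : ℚ) ^ (-((N : ℤ) + 1))) :
    (K : ℤ) ^ (N + 1) ∣ s.choose k - b := by
  set c : ℚ := (∏ j ∈ range k, ((m : ℚ) - j * n)) / (n ^ k * k.factorial)
  have hK1 : (1 : ℚ) ≤ K := by exact_mod_cast (Fact.out : K.Prime).one_le
  rw [← Nat.cast_pow, padicNorm.dvd_iff_norm_le]
  push_cast
  calc padicNorm K (s.choose k - b) = padicNorm K ((s.choose k - c) - (b - c)) := by
        rw [sub_sub_sub_cancel_right]
    _ ≤ max (padicNorm K (s.choose k - c)) (padicNorm K (b - c)) := padicNorm.sub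
    _ ≤ (K : ℚ) ^ (-((N : ℤ) + 1)) :=
      max_le ((padicNorm_choose_sub_le hn h k).trans (zpow_le_zpow_right₀ hK1 (by omega))) hb

/-- Let `K` be a prime, `ζ = exp(2πi/K)`, `m, n ∈ ℤ` with `K ∤ n`, and
`n* ∈ ℤ` with `n·n* ≡ 1 (mod K)`.  Let `c_k = m(m−n)⋯(m−(k−1)n)/(nᵏ·k!) ∈ ℚ`.
Then for every `N ≥ 0`, every `M ≥ (N+1)(K−1)`, and every choice of integers
`b₀, …, b_M` with `v_K(b_k − c_k) ≥ N+1` for `0 ≤ k ≤ M` (with the convention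
`v_K(0) = ∞`), one has `ζ^{m·n*} − ∑_{k=0}^{M} b_k (ζ−1)^k ∈ K^{N+1}·ℤ[ζ]`. -/
theorem stmt3 (K : ℕ) (hK : K.Prime)
    (ζ : ℂ) (hζ : ζ = Complex.exp (2 * Real.pi * Complex.I / K))
    (m n nstar : ℤ) (hn : ¬ (K : ℤ) ∣ n) (hnstar : n * nstar ≡ 1 [ZMOD (K : ℤ)])
    (c : ℕ → ℚ)
    (hc : ∀ k : ℕ, c k = (∏ j ∈ Finset.range k, ((m : ℚ) - (j : ℚ) * (n : ℚ))) /
        ((n : ℚ) ^ k * (k.factorial : ℚ)))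
    (N M : ℕ) (hM : (N + 1) * (K - 1) ≤ M)
    (b : ℕ → ℤ)
    (hb : ∀ k ≤ M, ((b k : ℚ) - c k = 0) ∨ ((N : ℤ) + 1 ≤ padicValRat K ((b k : ℚ) - c k))) :
    ∃ x ∈ Subring.closure {ζ},
      ζ ^ (m * nstar) - ∑ k ∈ Finset.range (M + 1), (b k : ℂ) * (ζ - 1) ^ k
        = (K : ℂ) ^ (N + 1) * x := by
  have := Fact.mk hK
  have hζK : IsPrimitiveRoot ζ K := hζ ▸ Complex.isPrimitiveRoot_exp K hK.ne_zero
  have hKn : IsCoprime n ((K : ℤ) ^ (N + 1 + M)) :=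
    (((Nat.prime_iff_prime_int.mp hK).coprime_iff_not_dvd).2 hn).pow_left.symm
  obtain ⟨s, hs⟩ :=
    Int.exists_natCast_mul_modEq (pow_ne_zero _ (by exact_mod_cast hK.ne_zero)) hKn m
  have hζs : ζ ^ (m * nstar) = ζ ^ s := by
    have hsK : (s : ℤ) ≡ m * nstar [ZMOD K] := calc
      (s : ℤ) = 1 * s := (one_mul _).symm
      _ ≡ n * nstar * s [ZMOD K] := (hnstar.mul_right _).symm
      _ = n * s * nstar := by ring
      _ ≡ m * nstar [ZMOD K] := (hs.of_dvd (dvd_pow_self _ (by omega))).mul_right _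
    obtain ⟨t, ht⟩ := hsK.dvd
    rw [show m * nstar = s + K * t by omega, zpow_add₀ (hζK.ne_zero hK.ne_zero), zpow_mul,
      hζK.zpow_eq_one, one_zpow, mul_one, zpow_natCast]
  set R := Subring.closure ({ζ} : Set ℂ)
  let z : R := ⟨ζ, Subring.subset_closure rfl⟩
  have hz : IsPrimitiveRoot z K := hζK.of_map_of_injective (f := R.subtype) Subtype.val_injective
  obtain ⟨x, hx⟩ := pow_dvd_add_one_pow_sub_sum (hz.associated_natCast_sub_one_pow hK).dvd hM s
    (fun k => (b k : R)) fun k hk => by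
      have hdvd := natCast_pow_dvd_choose_sub hn hk hs
        (hc k ▸ padicNorm_le_zpow_neg_of_le_padicValRat (hb k hk))
      exact_mod_cast (Int.castRingHom R).map_dvd hdvd
  refine ⟨x, x.2, ?_⟩
  rw [hζs]
  simpa [z] using congrArg Subtype.val hx
end

section
/- Let K > 0 be a real number, let p be a nonzero integer, and let m ∈ ℤ. Then the improper integral ∫_{−∞}^{+∞} exp(iπpβ²/(2K)) · ( exp(2πimβ/K) + exp(−2πimβ/K) ) dβ, understood as the limit as R → +∞ of the integrals over [−R, R], exists and equals (8K)^{1/2} · e^{(iπ/4)·sign(p)} · |p|^{−1/2} · exp(−2πi·m²/(p·K)). -/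
/-!
Completing the square writes the integrand as `e^{b c²} (e^{-b (β - c)²} + e^{-b (β + c)²})` with
`b = -iπp/(2K)` purely imaginary and `c = -2m/p`, so everything reduces to the Fresnel integral
`∫ e^{-b x²} dx = (π/b)^{1/2}` on the line `Re b = 0`. Integrating by parts against `1/(2bx)`
bounds the tail `∫_T^{T'} e^{-b x²}` by `1/(‖b‖ T)` uniformly on the closed half-plane `Re b ≥ 0`.
For `Re b > 0` the Gaussian integral is known; the uniform bound survives the limit `b + ε → b`,
which gives both the value and the convergence of the Fresnel integral for arbitrary endpoints
`u → -∞`, `v → +∞`, and hence for the shifted intervals `[-R ± c, R ± c]`.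
-/

open Complex Real Filter MeasureTheory intervalIntegral Set Topology

theorem norm_cexp_neg_mul_sq_le_one {b : ℂ} (hb : 0 ≤ b.re) (x : ℝ) :
    ‖cexp (-b * x ^ 2)‖ ≤ 1 := by
  rw [norm_cexp_neg_mul_sq, Real.exp_le_one_iff, neg_mul, neg_nonpos]
  positivity

theorem hasDerivAt_neg_cexp_neg_mul_sq_div {b : ℂ} (hb : b ≠ 0) {x : ℝ} (hx : x ≠ 0) :
    HasDerivAt (fun x : ℝ => -cexp (-b * x ^ 2) / (2 * b * x))
      (cexp (-b * x ^ 2) + cexp (-b * x ^ 2) / (2 * b * x ^ 2)) x := by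
  have hxC : (x : ℂ) ≠ 0 := ofReal_ne_zero.mpr hx
  have hsq : HasDerivAt (fun z : ℂ => -b * z ^ 2) (-b * (2 * x)) x := by
    simpa [mul_comm] using (hasDerivAt_pow 2 (x : ℂ)).const_mul (-b)
  have hexp : HasDerivAt (fun z : ℂ => cexp (-b * z ^ 2)) (cexp (-b * x ^ 2) * (-b * (2 * x))) x :=
    (Complex.hasDerivAt_exp _).comp _ hsq
  have hden : HasDerivAt (fun z : ℂ => 2 * b * z) (2 * b) x := by
    simpa using (hasDerivAt_id (x : ℂ)).const_mul (2 * b)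
  have := (hexp.neg.div hden (by simp [hb, hxC])).comp_ofReal
  refine this.congr_deriv ?_
  simp only [Pi.neg_apply]
  field_simp
  ring

theorem integral_inv_sq {T T' : ℝ} (hT : 0 < T) (hTT' : T ≤ T') :
    ∫ x in T..T', (x ^ 2)⁻¹ = T⁻¹ - T'⁻¹ := by
  have hpos : ∀ x ∈ uIcc T T', 0 < x := fun x hx => hT.trans_le (by
    rw [uIcc_of_le hTT'] at hx; exact hx.1)
  rw [integral_eq_sub_of_hasDerivAt (f := fun x => -x⁻¹)
    (fun x hx => by simpa using (hasDerivAt_inv (hpos x hx).ne').fun_neg)]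
  · ring
  · exact (continuousOn_id.pow 2).inv₀ (fun x hx => (pow_pos (hpos x hx) 2).ne')
      |>.intervalIntegrable

theorem norm_integral_cexp_neg_mul_sq_le {b : ℂ} (hb : 0 ≤ b.re) (hb0 : b ≠ 0) {T T' : ℝ}
    (hT : 0 < T) (hTT' : T ≤ T') :
    ‖∫ x in T..T', cexp (-b * x ^ 2)‖ ≤ 1 / (‖b‖ * T) := by
  set f : ℝ → ℂ := fun x => cexp (-b * x ^ 2)
  set g : ℝ → ℂ := fun x => -f x / (2 * b * x)
  have hpos : ∀ x ∈ uIcc T T', 0 < x := fun x hx => hT.trans_le (by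
    rw [uIcc_of_le hTT'] at hx; exact hx.1)
  have hf : IntervalIntegrable f volume T T' := (by fun_prop : Continuous f).intervalIntegrable _ _
  have hrem : IntervalIntegrable (fun x => f x / (2 * b * x ^ 2)) volume T T' :=
    ContinuousOn.intervalIntegrable (by
      refine (by fun_prop : Continuous f).continuousOn.div (by fun_prop) fun x hx => ?_
      have := (hpos x hx).ne'
      simp [hb0, this])
  have parts : ∫ x in T..T', f x = g T' - g T - ∫ x in T..T', f x / (2 * b * x ^ 2) := by
    rw [← integral_eq_sub_of_hasDerivAt
      (fun x hx => hasDerivAt_neg_cexp_neg_mul_sq_div hb0 (hpos x hx).ne') (hf.add hrem),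
      integral_add hf hrem]
    ring
  have hg : ∀ x, 0 < x → ‖g x‖ ≤ 1 / (2 * ‖b‖ * x) := fun x hx => by
    simp only [g, norm_div, norm_neg, norm_mul, norm_real, Real.norm_of_nonneg hx.le,
      Complex.norm_two]
    gcongr
    exact norm_cexp_neg_mul_sq_le_one hb x
  have hrem_le : ‖∫ x in T..T', f x / (2 * b * x ^ 2)‖ ≤ 1 / (2 * ‖b‖ * T) - 1 / (2 * ‖b‖ * T') :=
    calc ‖∫ x in T..T', f x / (2 * b * x ^ 2)‖ ≤ ∫ x in T..T', (2 * ‖b‖)⁻¹ * (x ^ 2)⁻¹ := by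
          refine norm_integral_le_of_norm_le hTT' (ae_of_all _ fun x hx => ?_) ?_
          · have hx0 : 0 < x := hT.trans hx.1
            rw [norm_div, div_eq_mul_inv, mul_comm, norm_mul, norm_mul, norm_pow, norm_real,
              Real.norm_eq_abs, sq_abs, Complex.norm_two, mul_inv]
            exact mul_le_of_le_one_right (by positivity) (norm_cexp_neg_mul_sq_le_one hb x)
          · exact ContinuousOn.intervalIntegrable (continuousOn_const.mul
              ((continuousOn_id.pow 2).inv₀ fun x hx => (pow_pos (hpos x hx) 2).ne'))
      _ = 1 / (2 * ‖b‖ * T) - 1 / (2 * ‖b‖ * T') := by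
          rw [intervalIntegral.integral_const_mul, integral_inv_sq hT hTT']
          field_simp
  have hT' := hT.trans_le hTT'
  calc ‖∫ x in T..T', f x‖ ≤ ‖g T'‖ + ‖g T‖ + ‖∫ x in T..T', f x / (2 * b * x ^ 2)‖ := by
        rw [parts]
        exact (norm_sub_le _ _).trans (add_le_add_left (norm_sub_le _ _) _)
    _ ≤ 1 / (2 * ‖b‖ * T') + 1 / (2 * ‖b‖ * T) + (1 / (2 * ‖b‖ * T) - 1 / (2 * ‖b‖ * T')) := by
        gcongr
        exacts [hg T' hT', hg T hT]
    _ = 1 / (‖b‖ * T) := by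
        field_simp
        ring

theorem norm_integral_cexp_neg_mul_sq_sub_le_of_re_pos {b : ℂ} (hb : 0 < b.re) {T : ℝ}
    (hT : 0 < T) :
    ‖(∫ x in 0..T, cexp (-b * x ^ 2)) - (π / b) ^ (1 / 2 : ℂ) / 2‖ ≤ 1 / (‖b‖ * T) := by
  have hint : IntegrableOn (fun x : ℝ => cexp (-b * x ^ 2)) (Ioi 0) :=
    (integrable_cexp_neg_mul_sq hb).integrableOn
  have hcont : Continuous fun x : ℝ => cexp (-b * x ^ 2) := by fun_prop
  have hlim := (intervalIntegral_tendsto_integral_Ioi 0 hint tendsto_id).const_sub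
    (∫ x in 0..T, cexp (-b * x ^ 2))
  rw [integral_gaussian_complex_Ioi hb] at hlim
  refine le_of_tendsto hlim.norm (eventually_ge_atTop T |>.mono fun T' hT' => ?_)
  rw [id, integral_interval_sub_left (hcont.intervalIntegrable _ _)
    (hcont.intervalIntegrable _ _), integral_symm, norm_neg]
  exact norm_integral_cexp_neg_mul_sq_le hb.le (by rintro rfl; simp at hb) hT hT'

theorem div_mem_slitPlane_of_re_nonneg {a : ℝ} (ha : 0 < a) {b : ℂ} (hb : 0 ≤ b.re)
    (hb0 : b ≠ 0) : a / b ∈ slitPlane := by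
  have hnorm : 0 < normSq b := normSq_pos.mpr hb0
  rcases hb.lt_or_eq with hre | hre
  · left
    simp only [div_re, ofReal_re, ofReal_im, zero_mul]
    positivity
  · right
    have him : b.im ≠ 0 := fun him => hb0 (Complex.ext hre.symm him)
    simp [div_im, ha.ne', him, hnorm.ne']

theorem norm_integral_cexp_neg_mul_sq_sub_le {b : ℂ} (hb : 0 ≤ b.re) (hb0 : b ≠ 0) {T : ℝ}
    (hT : 0 < T) :
    ‖(∫ x in 0..T, cexp (-b * x ^ 2)) - (π / b) ^ (1 / 2 : ℂ) / 2‖ ≤ 1 / (‖b‖ * T) := by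
  have hcont : ContinuousAt (fun ε : ℝ =>
      ‖(∫ x in 0..T, cexp (-(b + ε) * x ^ 2)) - (π / (b + ε)) ^ (1 / 2 : ℂ) / 2‖) 0 := by
    have hcpow : ContinuousAt (fun ε : ℝ => (π / (b + ε)) ^ (1 / 2 : ℂ)) 0 := by
      refine ContinuousAt.comp (f := fun ε : ℝ => π / (b + ε)) (g := (· ^ (1 / 2 : ℂ))) ?_
        (continuousAt_const.div (by fun_prop) (by simpa using hb0))
      exact continuousAt_cpow_const (by simpa using div_mem_slitPlane_of_re_nonneg pi_pos hb hb0)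
    refine ((Continuous.continuousAt ?_).sub (hcpow.div_const 2)).norm
    exact continuous_parametric_intervalIntegral_of_continuous' (by fun_prop) 0 T
  have hbound : ContinuousAt (fun ε : ℝ => 1 / (‖b + ε‖ * T)) 0 :=
    continuousAt_const.div (by fun_prop) (by simpa using ⟨hb0, hT.ne'⟩)
  have hlim := hcont.tendsto.mono_left (nhdsWithin_le_nhds (s := Ioi 0))
  have hlim_bound := hbound.tendsto.mono_left (nhdsWithin_le_nhds (s := Ioi 0))
  simp only [ofReal_zero, add_zero] at hlim hlim_bound
  refine le_of_tendsto_of_tendsto hlim hlim_bound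
    (eventually_nhdsWithin_of_forall fun ε (hε : 0 < ε) => ?_)
  refine norm_integral_cexp_neg_mul_sq_sub_le_of_re_pos ?_ hT
  simp only [add_re, ofReal_re]
  linarith

theorem tendsto_integral_zero_cexp_neg_mul_sq {b : ℂ} (hb : 0 ≤ b.re) (hb0 : b ≠ 0) :
    Tendsto (fun T : ℝ => ∫ x in 0..T, cexp (-b * x ^ 2)) atTop
      (𝓝 ((π / b) ^ (1 / 2 : ℂ) / 2)) := by
  rw [tendsto_iff_norm_sub_tendsto_zero]
  refine squeeze_zero' (Eventually.of_forall fun _ => norm_nonneg _)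
    ((eventually_gt_atTop 0).mono fun T hT => norm_integral_cexp_neg_mul_sq_sub_le hb hb0 hT) ?_
  exact tendsto_const_nhds.div_atTop (tendsto_id.const_mul_atTop (norm_pos_iff.mpr hb0))

theorem integral_cexp_neg_mul_sq_eq_add (b : ℂ) (u v : ℝ) :
    ∫ x in u..v, cexp (-b * x ^ 2) =
      (∫ x in 0..v, cexp (-b * x ^ 2)) + ∫ x in 0..-u, cexp (-b * x ^ 2) := by
  have hcont : Continuous fun x : ℝ => cexp (-b * x ^ 2) := by fun_prop
  have heven : ∫ x in 0..-u, cexp (-b * x ^ 2) = ∫ x in u..0, cexp (-b * x ^ 2) := by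
    have := integral_comp_neg (a := 0) (b := -u) fun x : ℝ => cexp (-b * x ^ 2)
    simp only [ofReal_neg, neg_neg, neg_zero] at this
    simpa using this
  rw [heven, add_comm, integral_add_adjacent_intervals (hcont.intervalIntegrable _ _)
    (hcont.intervalIntegrable _ _)]

theorem tendsto_integral_cexp_neg_mul_sq {b : ℂ} (hb : 0 ≤ b.re) (hb0 : b ≠ 0) {ι : Type*}
    {l : Filter ι} {u v : ι → ℝ} (hu : Tendsto u l atBot) (hv : Tendsto v l atTop) :
    Tendsto (fun i => ∫ x in u i..v i, cexp (-b * x ^ 2)) l (𝓝 ((π / b) ^ (1 / 2 : ℂ))) := by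
  have := ((tendsto_integral_zero_cexp_neg_mul_sq hb hb0).comp hv).add
    ((tendsto_integral_zero_cexp_neg_mul_sq hb hb0).comp (tendsto_neg_atBot_atTop.comp hu))
  rw [add_halves] at this
  exact this.congr fun i => (integral_cexp_neg_mul_sq_eq_add b _ _).symm

theorem tendsto_integral_cexp_neg_mul_add_sq {b : ℂ} (hb : 0 ≤ b.re) (hb0 : b ≠ 0) (c : ℝ) :
    Tendsto (fun R : ℝ => ∫ x in -R..R, cexp (-b * (x + c) ^ 2)) atTop
      (𝓝 ((π / b) ^ (1 / 2 : ℂ))) := by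
  have := tendsto_integral_cexp_neg_mul_sq hb hb0
    (tendsto_atBot_add_const_right atTop c tendsto_neg_atTop_atBot)
    (tendsto_atTop_add_const_right atTop c tendsto_id)
  refine this.congr fun R => ?_
  simpa only [ofReal_add, id] using
    (integral_comp_add_right (fun x : ℝ => cexp (-b * x ^ 2)) c).symm

theorem cexp_neg_mul_sq_mul_add_cexp (b c x : ℂ) :
    cexp (-b * x ^ 2) * (cexp (2 * b * c * x) + cexp (-(2 * b * c * x))) =
      cexp (b * c ^ 2) * (cexp (-b * (x + -c) ^ 2) + cexp (-b * (x + c) ^ 2)) := by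
  simp only [mul_add, ← Complex.exp_add]
  congr 2 <;> ring

theorem tendsto_integral_cexp_neg_mul_sq_mul_add_cexp {b : ℂ} (hb : 0 ≤ b.re) (hb0 : b ≠ 0)
    (c : ℝ) :
    Tendsto (fun R : ℝ => ∫ x in -R..R,
        cexp (-b * x ^ 2) * (cexp (2 * b * c * x) + cexp (-(2 * b * c * x))))
      atTop (𝓝 (2 * cexp (b * c ^ 2) * (π / b) ^ (1 / 2 : ℂ))) := by
  have hlim := ((tendsto_integral_cexp_neg_mul_add_sq hb hb0 (-c)).add
    (tendsto_integral_cexp_neg_mul_add_sq hb hb0 c)).const_mul (cexp (b * c ^ 2))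
  rw [← two_mul, mul_left_comm, ← mul_assoc] at hlim
  refine hlim.congr fun R => ?_
  rw [← integral_add ((by fun_prop : Continuous _).intervalIntegrable _ _)
    ((by fun_prop : Continuous _).intervalIntegrable _ _), ← intervalIntegral.integral_const_mul]
  exact integral_congr fun x _ => by rw [cexp_neg_mul_sq_mul_add_cexp, ofReal_neg]

theorem cpow_half_ofReal_mul_sign_mul_I {t : ℝ} (ht : 0 < t) {s : ℤ} (hs : s = 1 ∨ s = -1) :
    ((t : ℂ) * (s * I)) ^ (1 / 2 : ℂ) = √t * cexp (π * I / 4 * s) := by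
  have hsI : (s * I : ℂ) ≠ 0 := by rcases hs with rfl | rfl <;> simp
  have hlog : Complex.log (s * I) = π / 2 * I * s := by
    rcases hs with rfl | rfl
    · simp [log_I]
    · simp [log_neg_I]
  rw [cpow_def_of_ne_zero (mul_ne_zero (ofReal_ne_zero.2 ht.ne') hsI), log_ofReal_mul ht hsI, hlog,
    Real.sqrt_eq_rpow, Real.rpow_def_of_pos ht, ofReal_exp, ← Complex.exp_add]
  push_cast
  ring_nf

theorem two_mul_cpow_half_pi_div_mul_I {K : ℝ} (hK : 0 < K) {p : ℤ} (hp : p ≠ 0) :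
    2 * (π / (((-(π * p / (2 * K)) : ℝ) : ℂ) * I)) ^ (1 / 2 : ℂ) =
      √(8 * K) * cexp (π * I / 4 * p.sign) * (√|(p : ℝ)| : ℂ)⁻¹ := by
  have hsign : p.sign = 1 ∨ p.sign = -1 := by
    rcases hp.lt_or_gt with h | h
    exacts [.inr (Int.sign_eq_neg_one_of_neg h), .inl (Int.sign_eq_one_of_pos h)]
  have habs : ((|(p : ℝ)| : ℝ) : ℂ) * p.sign = p := by
    exact_mod_cast congrArg (Int.cast (R := ℂ)) ((mul_comm _ _).trans (Int.sign_mul_abs p))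
  have hpi_div : π / (((-(π * p / (2 * K)) : ℝ) : ℂ) * I) =
      ((2 * K / |(p : ℝ)| : ℝ) : ℂ) * (p.sign * I) := by
    have hpabs : ((|(p : ℝ)| : ℝ) : ℂ) ≠ 0 := by simpa using hp
    have hKC : (K : ℂ) ≠ 0 := ofReal_ne_zero.mpr hK.ne'
    rw [div_eq_iff (by simp [hp, hK.ne', pi_ne_zero])]
    push_cast
    rw [← habs]
    field_simp
    rcases hsign with h | h <;> simp [h]
  have h8 : √(8 * K) = 2 * √(2 * K) := by
    rw [show 8 * K = 2 ^ 2 * (2 * K) by ring, Real.sqrt_mul (by norm_num),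
      Real.sqrt_sq (by norm_num)]
  rw [hpi_div, cpow_half_ofReal_mul_sign_mul_I (by positivity) hsign,
    Real.sqrt_div' _ (abs_nonneg _), h8]
  push_cast
  ring

/-- For `K > 0` real, `p` a nonzero integer and `m ∈ ℤ`, the improper integral
`∫_{−∞}^{+∞} exp(iπpβ²/(2K)) (exp(2πimβ/K) + exp(−2πimβ/K)) dβ`, understood as
the limit of `∫_{−R}^{R}` as `R → +∞`, exists and equals
`(8K)^{1/2} e^{(iπ/4)sign(p)} |p|^{−1/2} exp(−2πim²/(pK))`. -/
theorem stmt6 (K : ℝ) (hK : 0 < K) (p : ℤ) (hp : p ≠ 0) (m : ℤ) :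
    Filter.Tendsto
      (fun R : ℝ => ∫ β in (-R)..R,
        Complex.exp (Real.pi * Complex.I * (p : ℂ) * (β : ℂ) ^ 2 / (2 * (K : ℂ)))
          * (Complex.exp (2 * Real.pi * Complex.I * (m : ℂ) * (β : ℂ) / (K : ℂ))
            + Complex.exp (-(2 * Real.pi * Complex.I * (m : ℂ) * (β : ℂ) / (K : ℂ)))))
      Filter.atTop
      (nhds ((Real.sqrt (8 * K) : ℂ)
        * Complex.exp (Real.pi * Complex.I / 4 * (p.sign : ℂ))
        * (Real.sqrt |(p : ℝ)| : ℂ)⁻¹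
        * Complex.exp (-(2 * Real.pi * Complex.I * (m : ℂ) ^ 2 / ((p : ℂ) * (K : ℂ)))))) := by
  have hpC : (p : ℂ) ≠ 0 := Int.cast_ne_zero.mpr hp
  have hKC : (K : ℂ) ≠ 0 := ofReal_ne_zero.mpr hK.ne'
  set b : ℂ := ((-(π * p / (2 * K)) : ℝ) : ℂ) * I with hb_def
  set c : ℝ := -(2 * m / p)
  have hb_re : 0 ≤ b.re := by rw [hb_def, re_ofReal_mul, I_re, mul_zero]
  have hb0 : b ≠ 0 := by simp [b, hpC, hKC, pi_ne_zero]
  have hquad : ∀ β : ℝ, π * I * p * β ^ 2 / (2 * K) = -b * β ^ 2 := fun β => by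
    simp only [b]; push_cast; ring
  have hlin : ∀ β : ℝ, 2 * π * I * m * β / K = 2 * b * c * β := fun β => by
    simp only [b, c]; push_cast; field_simp
  have hconst : b * c ^ 2 = -(2 * π * I * m ^ 2 / (p * K)) := by
    simp only [b, c]; push_cast; field_simp
  convert tendsto_integral_cexp_neg_mul_sq_mul_add_cexp hb_re hb0 c using 2 with R
  · exact integral_congr fun β _ => by simp only [hquad, hlin]
  · rw [hconst, hb_def, ← two_mul_cpow_half_pi_div_mul_I hK hp]
    ring
end

section
/- Let K be a prime, ζ = exp(2πi/K), and let f ∈ ℤ[q,q⁻¹] be a Laurent polynomial with integer coefficients, with a₀, a₁, a₂, … ∈ ℤ the coefficients of the power-series expansion of f(1+h) in ℤ[[h]]. Then for every N₀ ≥ 0 and every integer N with N + 1 ≥ (N₀+1)(K−1), one has f(ζ) − Σ_{n=0}^{N} aₙ·(ζ−1)ⁿ ∈ K^{N₀+1}·ℤ[ζ]. (In other words, the series Σₙ aₙ(ζ−1)ⁿ converges K-adically to f(ζ) in ℤ[ζ].) -/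
/-!
Write `g = f - ∑_{n ≤ N} aₙ (q - 1)ⁿ`. Its image `g(1+h)` is the tail of the expansion of
`f(1+h)`, hence divisible by `h^{N+1}`; since the substitution `q = 1 + h` is invertible on
polynomials and `q` is a unit, this lifts to `(q - 1)^{N+1} ∣ g` in `ℤ[q,q⁻¹]`. Evaluating at
`ζ`, the quotient lands in `ℤ[ζ]` (as `ζ⁻¹ = ζ^{K-1}`), and `(ζ - 1)^{K-1} ∈ K ℤ[ζ]` because
`Φ_K = ∑_{i<K} Xⁱ ≡ (X - 1)^{K-1} (mod K)` and `Φ_K(ζ) = 0`.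
-/

open Polynomial

theorem Polynomial.eval₂_intCast_mem_subring_closure {A : Type*} [Ring A] (x : A) (p : ℤ[X]) :
    p.eval₂ (Int.castRingHom A) x ∈ Subring.closure {x} := by
  simpa [Algebra.adjoin_int, aeval_def] using aeval_mem_adjoin_singleton ℤ x (p := p)

theorem Polynomial.X_pow_dvd_of_X_pow_dvd_coe {R : Type*} [Semiring R] {n : ℕ} {p : R[X]}
    (h : PowerSeries.X ^ n ∣ (p : PowerSeries R)) : X ^ n ∣ p := by
  rw [X_pow_dvd_iff]
  intro d hd
  simpa using PowerSeries.X_pow_dvd_iff.1 h d hd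

theorem exists_sub_one_pow_pred_eq_prime_mul {A : Type*} [CommRing A] {p : ℕ} (hp : p.Prime)
    {x : A} (hx : ∑ i ∈ Finset.range p, x ^ i = 0) :
    ∃ y ∈ Subring.closure {x}, (x - 1) ^ (p - 1) = p * y := by
  have := Fact.mk hp
  have hcyc : cyclotomic (1 * p) (ZMod p) = cyclotomic 1 (ZMod p) ^ (p - 1) :=
    cyclotomic_mul_prime_eq_pow_of_not_dvd _ hp.not_dvd_one
  rw [one_mul, cyclotomic_one] at hcyc
  obtain ⟨q, hq⟩ : Polynomial.C (p : ℤ) ∣ (X - 1) ^ (p - 1) - cyclotomic p ℤ := by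
    refine (C_dvd_iff_dvd_coeff _ _).2 fun i ↦ (ZMod.intCast_zmod_eq_zero_iff_dvd _ p).1 ?_
    rw [← eq_intCast (Int.castRingHom _), ← coeff_map, Polynomial.map_sub, map_cyclotomic, hcyc]
    simp
  refine ⟨q.eval₂ (Int.castRingHom A) x, eval₂_intCast_mem_subring_closure x q, ?_⟩
  have := congr_arg (eval₂ (Int.castRingHom A) x) hq
  simp only [eval₂_sub, eval₂_pow, eval₂_X, eval₂_one, cyclotomic_prime, eval₂_finsetSum, hx,
    eval₂_mul, Polynomial.eval₂_C, sub_zero] at this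
  rwa [eq_intCast, Int.cast_natCast] at this

theorem exists_sub_one_pow_eq_prime_pow_mul {A : Type*} [CommRing A] {p : ℕ} (hp : p.Prime)
    {x : A} (hx : ∑ i ∈ Finset.range p, x ^ i = 0) {k M : ℕ} (hM : k * (p - 1) ≤ M) :
    ∃ y ∈ Subring.closure {x}, (x - 1) ^ M = (p : A) ^ k * y := by
  obtain ⟨y, hy, hxy⟩ := exists_sub_one_pow_pred_eq_prime_mul hp hx
  obtain ⟨r, rfl⟩ := Nat.exists_eq_add_of_le hM
  have hx1 : x - 1 ∈ Subring.closure {x} := sub_mem (Subring.subset_closure rfl) (one_mem _)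
  refine ⟨y ^ k * (x - 1) ^ r, mul_mem (pow_mem hy k) (pow_mem hx1 r), ?_⟩
  rw [pow_add, mul_comm k, pow_mul, hxy, mul_pow, mul_assoc]

namespace LaurentPolynomial

theorem map_toLaurent_int {B : Type*} [CommRing B] (ψ : ℤ[T;T⁻¹] →+* B) (p : ℤ[X]) :
    ψ (toLaurent p) = p.eval₂ (Int.castRingHom B) (ψ (T 1)) := by
  change (ψ.comp toLaurent) p = eval₂RingHom (Int.castRingHom B) (ψ (T 1)) p
  congr 1
  ext : 1
  · exact RingHom.ext_int _ _
  · simp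

theorem map_mem_subring_closure {A : Type*} [CommRing A] (ev : ℤ[T;T⁻¹] →+* A) {k : ℕ}
    (hk : k ≠ 0) (hx : ev (T 1) ^ k = 1) (g : ℤ[T;T⁻¹]) :
    ev g ∈ Subring.closure {ev (T 1)} := by
  induction g using induction_on_mul_T with
  | mul_T p n =>
    have hinv : ev (T (-1)) = ev (T 1) ^ (k - 1) := by
      refine left_inv_eq_right_inv (a := ev (T 1)) ?_ ?_
      · rw [← map_mul, ← T_add]; simp
      · rw [← pow_succ', Nat.sub_add_cancel (Nat.one_le_iff_ne_zero.2 hk), hx]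
    rw [map_mul, map_toLaurent_int, ← mul_neg_one, ← T_pow, map_pow, hinv]
    have hmem : ev (T 1) ∈ Subring.closure {ev (T 1)} := Subring.subset_closure rfl
    exact mul_mem (eval₂_intCast_mem_subring_closure _ p) (pow_mem (pow_mem hmem _) _)

section PowerSeries

variable (φ : ℤ[T;T⁻¹] →+* PowerSeries ℤ) (hφ : φ (T 1) = 1 + PowerSeries.X)
include hφ

theorem map_sum_coeff_mul_sub_one_pow (F : PowerSeries ℤ) (M : ℕ) :
    φ (∑ n ∈ Finset.range M, ((PowerSeries.coeff n F : ℤ) : ℤ[T;T⁻¹]) * (T 1 - 1) ^ n)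
      = (PowerSeries.trunc M F : PowerSeries ℤ) := by
  rw [← eval₂_C_X_eq_coe, PowerSeries.eval₂_trunc_eq_sum_range, map_sum]
  refine Finset.sum_congr rfl fun n _ ↦ ?_
  rw [map_mul, map_intCast, map_pow, map_sub, hφ, map_one, add_sub_cancel_left,
    eq_intCast PowerSeries.C]

theorem X_pow_dvd_map_sub_sum_coeff (f : ℤ[T;T⁻¹]) (M : ℕ) :
    PowerSeries.X ^ M ∣ φ (f - ∑ n ∈ Finset.range M,
      ((PowerSeries.coeff n (φ f) : ℤ) : ℤ[T;T⁻¹]) * (T 1 - 1) ^ n) := by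
  rw [map_sub, map_sum_coeff_mul_sub_one_pow φ hφ]
  exact ⟨_, sub_eq_of_eq_add (PowerSeries.eq_X_pow_mul_shift_add_trunc M (φ f))⟩

theorem sub_one_pow_dvd_of_X_pow_dvd {n : ℕ} {g : ℤ[T;T⁻¹]}
    (h : PowerSeries.X ^ n ∣ φ g) : (T 1 - 1) ^ n ∣ g := by
  obtain ⟨m, p, hp⟩ := g.exists_T_pow
  have hφp : φ (toLaurent p) = (p.comp (X + Polynomial.C 1) : PowerSeries ℤ) := by
    rw [map_toLaurent_int, hφ, comp, ← coeToPowerSeries.ringHom_apply, hom_eval₂,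
      RingHom.ext_int (coeToPowerSeries.ringHom.comp Polynomial.C) (Int.castRingHom _)]
    simp [add_comm]
  have hdvd : X ^ n ∣ p.comp (X + Polynomial.C 1) := by
    refine X_pow_dvd_of_X_pow_dvd_coe ?_
    rw [← hφp, hp, map_mul]
    exact h.mul_right _
  rw [dvd_comp_X_add_C_iff, X_pow_comp] at hdvd
  have := map_dvd (toLaurent (R := ℤ)) hdvd
  rw [hp, map_pow, map_sub, toLaurent_X, toLaurent_C, map_one] at this
  exact (isUnit_T _).dvd_mul_right.1 this

end PowerSeries

end LaurentPolynomial

open LaurentPolynomial in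
/-- Let `K` be a prime, `ζ = exp(2πi/K)`, `f ∈ ℤ[q,q⁻¹]`, and let
`a₀, a₁, …` be the coefficients of the power-series expansion of `f(1+h)` in
`ℤ[[h]]` (via the unique ring homomorphism `φ : ℤ[q,q⁻¹] → ℤ[[h]]` with
`φ(q) = 1+h`; evaluation at `ζ` is the unique ring homomorphism
`ev : ℤ[q,q⁻¹] → ℂ` with `ev(q) = ζ`).  Then for every `N₀ ≥ 0` and every `N`
with `N + 1 ≥ (N₀+1)(K−1)`, one has
`f(ζ) − ∑_{n=0}^{N} aₙ(ζ−1)ⁿ ∈ K^{N₀+1}·ℤ[ζ]`, i.e. the series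
`∑ₙ aₙ(ζ−1)ⁿ` converges `K`-adically to `f(ζ)` in `ℤ[ζ]`. -/
theorem stmt14 (K : ℕ) (hK : K.Prime)
    (ζ : ℂ) (hζ : ζ = Complex.exp (2 * Real.pi * Complex.I / K))
    (f : LaurentPolynomial ℤ)
    (φ : LaurentPolynomial ℤ →+* PowerSeries ℤ) (hφ : φ (T 1) = 1 + PowerSeries.X)
    (a : ℕ → ℤ) (ha : ∀ k : ℕ, PowerSeries.coeff (R := ℤ) k (φ f) = a k)
    (ev : LaurentPolynomial ℤ →+* ℂ) (hev : ev (T 1) = ζ)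
    (N₀ N : ℕ) (hN : (N₀ + 1) * (K - 1) ≤ N + 1) :
    ∃ x ∈ Subring.closure {ζ},
      ev f - ∑ n ∈ Finset.range (N + 1), (a n : ℂ) * (ζ - 1) ^ n
        = (K : ℂ) ^ (N₀ + 1) * x := by
  have hprim : IsPrimitiveRoot ζ K := hζ ▸ Complex.isPrimitiveRoot_exp K hK.ne_zero
  obtain ⟨g, hg⟩ : (T 1 - 1) ^ (N + 1) ∣
      f - ∑ n ∈ Finset.range (N + 1), (a n : ℤ[T;T⁻¹]) * (T 1 - 1) ^ n := by
    refine sub_one_pow_dvd_of_X_pow_dvd φ hφ ?_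
    simpa only [ha] using X_pow_dvd_map_sub_sum_coeff φ hφ f (N + 1)
  have hevg : ev g ∈ Subring.closure {ζ} :=
    hev ▸ map_mem_subring_closure ev hK.ne_zero (hev ▸ hprim.pow_eq_one) g
  obtain ⟨y, hy, hζy⟩ :=
    exists_sub_one_pow_eq_prime_pow_mul hK (hprim.geom_sum_eq_zero hK.one_lt) hN
  refine ⟨y * ev g, mul_mem hy hevg, ?_⟩
  have hevf := congr_arg ev hg
  simp only [map_sub, map_sum, map_mul, map_intCast, map_pow, map_one, hev] at hevf
  rw [hevf, hζy, mul_assoc]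
end
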